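/- arXiv:2312.12166 — 5 statements merged into one kernel-verified Lean document; each statement's English description precedes it below -/
import Mathlib

section
/- Let F : ℝ^m → ℝ be a C² objective function, let c > 0 and let R be an m×m real matrix with R·Rᵀ = Id; set A = cR and G(z) = F(Az). Let (z_n) be the sequence constructed by BNQN with parameters δ₀,…,δ_m, θ, τ, γ₀ applied to F starting from an initial point z₀ ∈ ℝ^m, and let (z_n') be the sequence constructed by BNQN with parameters δ₀',…,δ_m', θ', τ, γ₀ applied to G starting from z₀' = A⁻¹z₀, where δ_i' = δ_i·c^{2−τ} for all 0 ≤ i ≤ m and θ' = cθ. Then z_n' = A⁻¹z_n for all n. -/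
open scoped Classical RealInnerProductSpace

noncomputable section

/-- `minsp A` : the minimum of the absolute values of the eigenvalues of a symmetric
operator `A`, realized as `min_{‖e‖ = 1} ‖A e‖`. -/
def minsp {m : ℕ} (A : EuclideanSpace ℝ (Fin m) →L[ℝ] EuclideanSpace ℝ (Fin m)) : ℝ :=
  sInf {r | ∃ e : EuclideanSpace ℝ (Fin m), ‖e‖ = 1 ∧ r = ‖A e‖}

/-- The span of the eigenvectors of `A` with positive eigenvalues. -/
def posSpace {m : ℕ} (A : EuclideanSpace ℝ (Fin m) →L[ℝ] EuclideanSpace ℝ (Fin m)) :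
    Submodule ℝ (EuclideanSpace ℝ (Fin m)) :=
  ⨆ (μ : ℝ) (_ : 0 < μ), Module.End.eigenspace (A : EuclideanSpace ℝ (Fin m) →ₗ[ℝ] EuclideanSpace ℝ (Fin m)) μ

/-- The span of the eigenvectors of `A` with negative eigenvalues. -/
def negSpace {m : ℕ} (A : EuclideanSpace ℝ (Fin m) →L[ℝ] EuclideanSpace ℝ (Fin m)) :
    Submodule ℝ (EuclideanSpace ℝ (Fin m)) :=
  ⨆ (μ : ℝ) (_ : μ < 0), Module.End.eigenspace (A : EuclideanSpace ℝ (Fin m) →ₗ[ℝ] EuclideanSpace ℝ (Fin m)) μ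

/-- One step of the Backtracking New Q-Newton's method (New Variant), with parameters
`δ 0, …, δ m`, `θ`, `τ`, `γ₀`, applied to `F` at the point `z`. -/
def bnqnStep {m : ℕ} (F : EuclideanSpace ℝ (Fin m) → ℝ) (δ : Fin (m + 1) → ℝ)
    (θ τ γ₀ : ℝ) (z : EuclideanSpace ℝ (Fin m)) : EuclideanSpace ℝ (Fin m) :=
  let g := gradient F z
  if g = 0 then z
  else
    -- κ = (1/2) min_{i ≠ j} |δ i - δ j|
    let κ : ℝ := (1 / 2) * sInf {t | ∃ i j : Fin (m + 1), i ≠ j ∧ t = |δ i - δ j|}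
    -- candidate matrices A_j = ∇²F(z) + δ_j ‖∇F(z)‖^τ Id
    let B : Fin (m + 1) → (EuclideanSpace ℝ (Fin m) →L[ℝ] EuclideanSpace ℝ (Fin m)) := fun j =>
      fderiv ℝ (gradient F) z + (δ j * ‖g‖ ^ τ) • ContinuousLinearMap.id ℝ (EuclideanSpace ℝ (Fin m))
    -- the least index j with minsp (A_j) ≥ κ ‖∇F(z)‖^τ
    if hj : ∃ j : ℕ, ∃ hjm : j < m + 1, κ * ‖g‖ ^ τ ≤ minsp (B ⟨j, hjm⟩) then
      let A := B ⟨Nat.find hj, (Nat.find_spec hj).choose⟩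
      let v := A.inverse g
      let w := ((Submodule.orthogonalProjection (posSpace A) v : EuclideanSpace ℝ (Fin m))
        - (Submodule.orthogonalProjection (negSpace A) v : EuclideanSpace ℝ (Fin m)))
      let wh := (max 1 (θ * ‖w‖))⁻¹ • w
      -- Armijo's backtracking line search: γ = γ₀ / 3^h for the least such h
      if hb : ∃ h : ℕ, F (z - (γ₀ / 3 ^ h) • wh) - F z ≤ -((γ₀ / 3 ^ h) * ⟪wh, g⟫) / 3 then
        z - (γ₀ / 3 ^ Nat.find hb) • wh
      else z
    else z

/-- The sequence constructed by the Backtracking New Q-Newton's method (New Variant)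
with parameters `δ 0, …, δ m`, `θ`, `τ`, `γ₀`, applied to `F` with initial point `z₀`. -/
def bnqnSeq {m : ℕ} (F : EuclideanSpace ℝ (Fin m) → ℝ) (δ : Fin (m + 1) → ℝ)
    (θ τ γ₀ : ℝ) (z₀ : EuclideanSpace ℝ (Fin m)) : ℕ → EuclideanSpace ℝ (Fin m)
  | 0 => z₀
  | n + 1 => bnqnStep F δ θ τ γ₀ (bnqnSeq F δ θ τ γ₀ z₀ n)

/-!
Write `V = Rᵀ`, a linear isometry since `R Rᵀ = Id` in finite dimension, so that `G(w) = F(c V⁻¹ w)`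
and the claim is that `T : z ↦ c⁻¹ V z` conjugates one BNQN step for `F` into one for `G`.
At `z' = T z` the chain rule gives `∇G(z') = c V ∇F(z)` and `∇²G(z') = c² V ∇²F(z) V⁻¹`. The choice
`δ' = c^{2-τ} δ` is what makes `δ'_j ‖∇G(z')‖^τ = c² δ_j ‖∇F(z)‖^τ`, hence `A'_j = c² V A_j V⁻¹` for
every `j`: `minsp` and the threshold `κ ‖∇F‖^τ` both scale by `c²`, so the same index is chosen, and
the positive and negative eigenspaces are transported by `V`. This gives `w' = c⁻¹ V w`; then
`θ' = c θ` leaves the normalising factor unchanged, `⟨ŵ', ∇G(z')⟩ = ⟨ŵ, ∇F(z)⟩` and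
`G(z' - γ ŵ') = F(z - γ ŵ)`, so the Armijo search picks the same `γ`.
-/

theorem LinearIsometryEquiv.smul_symm_smul_inv_apply {E : Type*} [NormedAddCommGroup E]
    [NormedSpace ℝ E] (V : E ≃ₗᵢ[ℝ] E) {c : ℝ} (hc : c ≠ 0) (z : E) :
    c • V.symm (c⁻¹ • V z) = z := by
  rw [map_smul, smul_smul, mul_inv_cancel₀ hc, one_smul, V.symm_apply_apply]

theorem rpow_two_sub_mul_norm_smul_rpow {E : Type*} [NormedAddCommGroup E] [NormedSpace ℝ E]
    {c : ℝ} (hc : 0 < c) (τ : ℝ) (x : E) :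
    c ^ ((2 : ℝ) - τ) * ‖c • x‖ ^ τ = c ^ 2 * ‖x‖ ^ τ := by
  rw [norm_smul, Real.norm_of_nonneg hc.le, Real.mul_rpow hc.le (norm_nonneg x), ← mul_assoc,
    ← Real.rpow_add hc, sub_add_cancel]
  norm_cast

theorem ContinuousLinearMap.mem_unitary_of_comp_adjoint_eq_id {𝕜 E : Type*} [RCLike 𝕜]
    [NormedAddCommGroup E] [InnerProductSpace 𝕜 E] [CompleteSpace E] [FiniteDimensional 𝕜 E]
    {R : E →L[𝕜] E} (hR : R ∘L adjoint R = .id 𝕜 E) : R ∈ unitary (E →L[𝕜] E) := by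
  have hR' : R * adjoint R = 1 := hR
  have hlin : (R : E →ₗ[𝕜] E) * (adjoint R : E →ₗ[𝕜] E) = 1 := by
    simpa using congrArg ((↑) : (E →L[𝕜] E) → E →ₗ[𝕜] E) hR'
  exact Unitary.mem_iff.mpr ⟨ContinuousLinearMap.coe_injective (mul_eq_one_symm hlin), hR⟩

section Calculus

variable {E E' : Type*} [NormedAddCommGroup E] [InnerProductSpace ℝ E] [CompleteSpace E]
  [NormedAddCommGroup E'] [InnerProductSpace ℝ E'] [CompleteSpace E']

open ContinuousLinearMap InnerProductSpace

theorem gradient_comp_continuousLinearMap {f : E → ℝ} (L : E' →L[ℝ] E) {y : E'}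
    (hf : DifferentiableAt ℝ f (L y)) :
    gradient (fun w => f (L w)) y = adjoint L (gradient f (L y)) := by
  have hdual :
      toDual ℝ E' (adjoint L (gradient f (L y))) = toDual ℝ E (gradient f (L y)) ∘L L := by
    ext v
    simp [adjoint_inner_left]
  refine HasGradientAt.gradient ?_
  rw [hasGradientAt_iff_hasFDerivAt, hdual]
  exact hf.hasGradientAt.hasFDerivAt.comp y L.hasFDerivAt

theorem fderiv_gradient_comp_continuousLinearMap {f : E → ℝ} (L : E' →L[ℝ] E) {y : E'}
    (hf : Differentiable ℝ f) (hgf : DifferentiableAt ℝ (gradient f) (L y)) :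
    fderiv ℝ (gradient fun w => f (L w)) y = adjoint L ∘L fderiv ℝ (gradient f) (L y) ∘L L := by
  have hgrad : gradient (fun w => f (L w)) = fun w => adjoint L (gradient f (L w)) :=
    funext fun w => gradient_comp_continuousLinearMap L (hf _)
  rw [hgrad]
  exact ((adjoint L).hasFDerivAt.comp y (hgf.hasFDerivAt.comp y L.hasFDerivAt)).fderiv

theorem ContDiff.differentiable_gradient {f : E → ℝ} (hf : ContDiff ℝ 2 f) :
    Differentiable ℝ (gradient f) :=
  (toDual ℝ E).symm.toContinuousLinearEquiv.toContinuousLinearMap.differentiable.comp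
    ((hf.fderiv_right (by norm_num)).differentiable one_ne_zero)

section Similarity

variable (V : E ≃ₗᵢ[ℝ] E) {c : ℝ} (hc : c ≠ 0)
include hc

theorem gradient_comp_similarity {f : E → ℝ} {z : E} (hf : DifferentiableAt ℝ f z) :
    gradient (fun w => f (c • V.symm w)) (c⁻¹ • V z) = c • V (gradient f z) := by
  have hz : (c • (V.symm : E →L[ℝ] E)) (c⁻¹ • V z) = z := V.smul_symm_smul_inv_apply hc z
  have h := gradient_comp_continuousLinearMap (c • (V.symm : E →L[ℝ] E)) (hz ▸ hf)
  rw [hz, map_smulₛₗ, LinearIsometryEquiv.adjoint_eq_symm] at h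
  simpa using h

theorem fderiv_gradient_comp_similarity {f : E → ℝ} (hf : ContDiff ℝ 2 f) (z : E) :
    fderiv ℝ (gradient fun w => f (c • V.symm w)) (c⁻¹ • V z) =
      c ^ 2 • V.conjStarAlgEquiv (fderiv ℝ (gradient f) z) := by
  have hz : (c • (V.symm : E →L[ℝ] E)) (c⁻¹ • V z) = z := V.smul_symm_smul_inv_apply hc z
  have h := fderiv_gradient_comp_continuousLinearMap (c • (V.symm : E →L[ℝ] E))
    (y := c⁻¹ • V z) (hf.differentiable (by norm_num)) (hf.differentiable_gradient _)
  rw [hz, map_smulₛₗ, LinearIsometryEquiv.adjoint_eq_symm] at h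
  change fderiv ℝ (gradient fun w => f (c • V.symm w)) _ = _ at h
  rw [h]
  ext x : 1
  simp [smul_smul, sq]

end Similarity

end Calculus

namespace Module.End

variable {K M : Type*} [Field K] [AddCommGroup M] [Module K M]

theorem eigenspace_smul (f : Module.End K M) {a : K} (ha : a ≠ 0) (μ : K) :
    eigenspace (a • f) (a * μ) = eigenspace f μ := by
  ext x
  simp only [mem_eigenspace_iff, LinearMap.smul_apply, ← smul_smul]
  exact ⟨fun h => smul_right_injective M ha h, fun h => by rw [h]⟩

theorem eigenspace_conj (e : M ≃ₗ[K] M) (f : Module.End K M) (μ : K) :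
    eigenspace (e.conj f) μ = (eigenspace f μ).map (e : M →ₗ[K] M) := by
  ext x
  simp only [mem_eigenspace_iff, LinearEquiv.conj_apply, LinearMap.comp_apply,
    Submodule.mem_map_equiv, LinearEquiv.coe_coe]
  rw [← e.symm.injective.eq_iff]
  simp

theorem iSup_eigenspace_smul {p : K → Prop} {a : K} (ha : a ≠ 0) (hp : ∀ μ, p (a * μ) ↔ p μ)
    (f : Module.End K M) :
    ⨆ (μ : K) (_ : p μ), eigenspace (a • f) μ = ⨆ (μ : K) (_ : p μ), eigenspace f μ := by
  rw [← (Equiv.mulLeft₀ a ha).iSup_comp]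
  simp only [Equiv.mulLeft₀_apply, hp, eigenspace_smul f ha]

theorem iSup_eigenspace_conj (p : K → Prop) (e : M ≃ₗ[K] M) (f : Module.End K M) :
    ⨆ (μ : K) (_ : p μ), eigenspace (e.conj f) μ =
      (⨆ (μ : K) (_ : p μ), eigenspace f μ).map (e : M →ₗ[K] M) := by
  simp only [eigenspace_conj, Submodule.map_iSup]

end Module.End

section ArmijoStep

variable {E E' : Type*} [NormedAddCommGroup E] [InnerProductSpace ℝ E]
  [NormedAddCommGroup E'] [InnerProductSpace ℝ E']

def armijoStep (f : E → ℝ) (γ₀ : ℝ) (z g d : E) : E :=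
  if hb : ∃ h : ℕ, f (z - (γ₀ / 3 ^ h) • d) - f z ≤ -((γ₀ / 3 ^ h) * ⟪d, g⟫) / 3 then
    z - (γ₀ / 3 ^ Nat.find hb) • d
  else z

theorem armijoStep_comp_linearEquiv (f : E → ℝ) (T : E' ≃ₗ[ℝ] E) (γ₀ : ℝ) {z g d : E}
    {g' : E'} (hg : ⟪T.symm d, g'⟫ = ⟪d, g⟫) :
    armijoStep (fun w => f (T w)) γ₀ (T.symm z) g' (T.symm d) =
      T.symm (armijoStep f γ₀ z g d) := by
  simp only [armijoStep, ← map_smul, ← map_sub, LinearEquiv.apply_symm_apply, hg]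
  split_ifs <;> rfl

theorem armijoStep_similarity (f : E → ℝ) (V : E ≃ₗᵢ[ℝ] E) {c : ℝ} (hc : c ≠ 0) (γ₀ : ℝ)
    (z g d : E) :
    armijoStep (fun w => f (c • V.symm w)) γ₀ (c⁻¹ • V z) (c • V g) (c⁻¹ • V d) =
      c⁻¹ • V (armijoStep f γ₀ z g d) := by
  set T : E ≃ₗ[ℝ] E := V.symm.toLinearEquiv.trans (LinearEquiv.smulOfNeZero ℝ E c hc)
  have hT_symm (x : E) : T.symm x = c⁻¹ • V x := by simp [T, Units.smul_def, map_smul]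
  have hinner : ⟪T.symm d, c • V g⟫ = ⟪d, g⟫ := by
    rw [hT_symm, inner_smul_left, inner_smul_right, V.inner_map_map, RCLike.conj_to_real,
      ← mul_assoc, inv_mul_cancel₀ hc, one_mul]
  have h := armijoStep_comp_linearEquiv f T γ₀ (z := z) hinner
  simp only [hT_symm] at h
  exact h

end ArmijoStep

open scoped Pointwise

section EuclideanSpace

variable {m : ℕ}

local notation "𝔼" => EuclideanSpace ℝ (Fin m)

theorem posSpace_smul {a : ℝ} (ha : 0 < a) (X : 𝔼 →L[ℝ] 𝔼) : posSpace (a • X) = posSpace X :=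
  Module.End.iSup_eigenspace_smul ha.ne' (fun _ => mul_pos_iff_of_pos_left ha) _

theorem negSpace_smul {a : ℝ} (ha : 0 < a) (X : 𝔼 →L[ℝ] 𝔼) : negSpace (a • X) = negSpace X :=
  Module.End.iSup_eigenspace_smul ha.ne'
    (fun _ => by rw [← neg_pos, ← mul_neg, mul_pos_iff_of_pos_left ha, neg_pos]) _

theorem posSpace_conjStarAlgEquiv (V : 𝔼 ≃ₗᵢ[ℝ] 𝔼) (X : 𝔼 →L[ℝ] 𝔼) :
    posSpace (V.conjStarAlgEquiv X) = (posSpace X).map (V.toLinearEquiv : 𝔼 →ₗ[ℝ] 𝔼) :=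
  Module.End.iSup_eigenspace_conj _ V.toLinearEquiv X

theorem negSpace_conjStarAlgEquiv (V : 𝔼 ≃ₗᵢ[ℝ] 𝔼) (X : 𝔼 →L[ℝ] 𝔼) :
    negSpace (V.conjStarAlgEquiv X) = (negSpace X).map (V.toLinearEquiv : 𝔼 →ₗ[ℝ] 𝔼) :=
  Module.End.iSup_eigenspace_conj _ V.toLinearEquiv X

theorem minsp_smul (a : ℝ) (X : 𝔼 →L[ℝ] 𝔼) : minsp (a • X) = |a| * minsp X := by
  have : {r | ∃ e : 𝔼, ‖e‖ = 1 ∧ r = ‖(a • X) e‖} =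
      |a| • {r | ∃ e : 𝔼, ‖e‖ = 1 ∧ r = ‖X e‖} := by
    ext r
    simp [Set.mem_smul_set, norm_smul, eq_comm]
  rw [minsp, minsp, this, Real.sInf_smul_of_nonneg (abs_nonneg a), smul_eq_mul]

theorem minsp_conjStarAlgEquiv (V : 𝔼 ≃ₗᵢ[ℝ] 𝔼) (X : 𝔼 →L[ℝ] 𝔼) :
    minsp (V.conjStarAlgEquiv X) = minsp X := by
  unfold minsp
  congr 1
  ext r
  simp only [LinearIsometryEquiv.conjStarAlgEquiv_apply_apply, LinearIsometryEquiv.norm_map,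
    Set.mem_ofPred_eq]
  exact ⟨fun ⟨e, he, hr⟩ => ⟨V.symm e, by rwa [V.symm.norm_map], hr⟩,
    fun ⟨e, he, hr⟩ => ⟨V e, by rwa [V.norm_map], by simpa using hr⟩⟩

theorem inverse_smul {a : ℝ} (ha : a ≠ 0) (X : 𝔼 →L[ℝ] 𝔼) :
    (a • X).inverse = a⁻¹ • X.inverse := by
  set S : 𝔼 ≃L[ℝ] 𝔼 := ContinuousLinearEquiv.smulLeft (Units.mk0 a ha)
  have hS : a • X = (S : 𝔼 →L[ℝ] 𝔼) ∘L X := by ext; simp [S]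
  have hS_symm (x : 𝔼) : S.symm x = a⁻¹ • x := by
    rw [ContinuousLinearEquiv.symm_apply_eq]; simp [S, smul_smul, ha]
  rw [hS, ContinuousLinearMap.inverse_equiv_comp]
  ext x : 1
  simp [hS_symm]

theorem inverse_conjStarAlgEquiv (V : 𝔼 ≃ₗᵢ[ℝ] 𝔼) (X : 𝔼 →L[ℝ] 𝔼) :
    (V.conjStarAlgEquiv X).inverse = V.conjStarAlgEquiv X.inverse := by
  have hconj (Y : 𝔼 →L[ℝ] 𝔼) : V.conjStarAlgEquiv Y = (V.toContinuousLinearEquiv : 𝔼 →L[ℝ] 𝔼) ∘L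
      Y ∘L (V.symm.toContinuousLinearEquiv : 𝔼 →L[ℝ] 𝔼) :=
    rfl
  rw [hconj, hconj, ContinuousLinearMap.inverse_equiv_comp,
    ContinuousLinearMap.inverse_comp_equiv]
  rfl

def bnqnOperator (F : 𝔼 → ℝ) (δ : Fin (m + 1) → ℝ) (τ : ℝ) (z : 𝔼) (j : Fin (m + 1)) :
    𝔼 →L[ℝ] 𝔼 :=
  fderiv ℝ (gradient F) z + (δ j * ‖gradient F z‖ ^ τ) • ContinuousLinearMap.id ℝ 𝔼

def bnqnKappa (δ : Fin (m + 1) → ℝ) : ℝ :=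
  (1 / 2) * sInf {t | ∃ i j : Fin (m + 1), i ≠ j ∧ t = |δ i - δ j|}

def bnqnDirection (θ : ℝ) (A : 𝔼 →L[ℝ] 𝔼) (g : 𝔼) : 𝔼 :=
  let v := A.inverse g
  let w := (posSpace A).starProjection v - (negSpace A).starProjection v
  (max 1 (θ * ‖w‖))⁻¹ • w

theorem bnqnStep_eq (F : 𝔼 → ℝ) (δ : Fin (m + 1) → ℝ) (θ τ γ₀ : ℝ) (z : 𝔼) :
    bnqnStep F δ θ τ γ₀ z =
      if gradient F z = 0 then z
      else if hj : ∃ j : ℕ, ∃ hjm : j < m + 1,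
          bnqnKappa δ * ‖gradient F z‖ ^ τ ≤ minsp (bnqnOperator F δ τ z ⟨j, hjm⟩) then
        armijoStep F γ₀ z (gradient F z)
          (bnqnDirection θ (bnqnOperator F δ τ z ⟨Nat.find hj, (Nat.find_spec hj).choose⟩)
            (gradient F z))
      else z :=
  rfl

theorem bnqnKappa_mul_const (δ : Fin (m + 1) → ℝ) (b : ℝ) :
    bnqnKappa (fun i => δ i * b) = |b| * bnqnKappa δ := by
  have : {t | ∃ i j : Fin (m + 1), i ≠ j ∧ t = |δ i * b - δ j * b|} =
      |b| • {t | ∃ i j : Fin (m + 1), i ≠ j ∧ t = |δ i - δ j|} := by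
    ext t
    simp only [Set.mem_ofPred_eq, Set.mem_smul_set, smul_eq_mul, ← sub_mul, abs_mul]
    constructor
    · rintro ⟨i, j, hij, rfl⟩
      exact ⟨_, ⟨i, j, hij, rfl⟩, mul_comm _ _⟩
    · rintro ⟨_, ⟨i, j, hij, rfl⟩, rfl⟩
      exact ⟨i, j, hij, mul_comm _ _⟩
  rw [bnqnKappa, bnqnKappa, this, Real.sInf_smul_of_nonneg (abs_nonneg b), smul_eq_mul]
  ring

theorem bnqnDirection_similarity (V : 𝔼 ≃ₗᵢ[ℝ] 𝔼) {c : ℝ} (hc : 0 < c) (θ : ℝ)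
    (A : 𝔼 →L[ℝ] 𝔼) (g : 𝔼) :
    bnqnDirection (c * θ) (c ^ 2 • V.conjStarAlgEquiv A) (c • V g) =
      c⁻¹ • V (bnqnDirection θ A g) := by
  have hv : (c ^ 2 • V.conjStarAlgEquiv A).inverse (c • V g) = V (c⁻¹ • A.inverse g) := by
    rw [inverse_smul (by positivity), inverse_conjStarAlgEquiv]
    simp only [LinearIsometryEquiv.conjStarAlgEquiv_apply_apply, smul_apply,
      LinearIsometryEquiv.symm_apply_apply, map_smul, smul_smul]
    congr 1
    field_simp
  simp only [bnqnDirection, hv, posSpace_smul (pow_pos hc 2), negSpace_smul (pow_pos hc 2),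
    posSpace_conjStarAlgEquiv, negSpace_conjStarAlgEquiv, Submodule.starProjection_map_apply,
    LinearIsometryEquiv.symm_apply_apply, map_smul, ← map_sub, ← smul_sub]
  generalize (posSpace A).starProjection (A.inverse g) -
    (negSpace A).starProjection (A.inverse g) = w
  have hθw : c * θ * ‖c⁻¹ • V w‖ = θ * ‖w‖ := by
    rw [norm_smul, V.norm_map, Real.norm_of_nonneg (inv_nonneg.mpr hc.le)]
    field_simp
  rw [hθw, smul_comm]

theorem bnqnOperator_similarity {F : 𝔼 → ℝ} (hF : ContDiff ℝ 2 F) (V : 𝔼 ≃ₗᵢ[ℝ] 𝔼) {c : ℝ}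
    (hc : 0 < c) (δ : Fin (m + 1) → ℝ) (τ : ℝ) (z : 𝔼) (j : Fin (m + 1)) :
    bnqnOperator (fun w => F (c • V.symm w)) (fun i => δ i * c ^ ((2 : ℝ) - τ)) τ (c⁻¹ • V z) j =
      c ^ 2 • V.conjStarAlgEquiv (bnqnOperator F δ τ z j) := by
  have hscale : δ j * c ^ ((2 : ℝ) - τ) * ‖c • V (gradient F z)‖ ^ τ =
      c ^ 2 * (δ j * ‖gradient F z‖ ^ τ) := by
    rw [mul_assoc, rpow_two_sub_mul_norm_smul_rpow hc, V.norm_map]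
    ring
  rw [bnqnOperator, bnqnOperator,
    gradient_comp_similarity V hc.ne' (hF.differentiable (by norm_num) z),
    fderiv_gradient_comp_similarity V hc.ne' hF, hscale, map_add, map_smul,
    ← ContinuousLinearMap.one_def, map_one, smul_add, mul_smul]

theorem bnqnKappa_mul_norm_rpow_similarity (V : 𝔼 ≃ₗᵢ[ℝ] 𝔼) {c : ℝ} (hc : 0 < c)
    (δ : Fin (m + 1) → ℝ) (τ : ℝ) (g : 𝔼) :
    bnqnKappa (fun i => δ i * c ^ ((2 : ℝ) - τ)) * ‖c • V g‖ ^ τ =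
      c ^ 2 * (bnqnKappa δ * ‖g‖ ^ τ) := by
  have h := rpow_two_sub_mul_norm_smul_rpow hc τ (V g)
  rw [V.norm_map] at h
  rw [bnqnKappa_mul_const, abs_of_pos (by positivity)]
  linear_combination bnqnKappa δ * h

theorem bnqnStep_similarity {F : 𝔼 → ℝ} (hF : ContDiff ℝ 2 F) (V : 𝔼 ≃ₗᵢ[ℝ] 𝔼) {c : ℝ}
    (hc : 0 < c) (δ : Fin (m + 1) → ℝ) (θ τ γ₀ : ℝ) (z : 𝔼) :
    bnqnStep (fun w => F (c • V.symm w)) (fun i => δ i * c ^ ((2 : ℝ) - τ)) (c * θ) τ γ₀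
      (c⁻¹ • V z) = c⁻¹ • V (bnqnStep F δ θ τ γ₀ z) := by
  have hc2 : 0 < c ^ 2 := by positivity
  rw [bnqnStep_eq, bnqnStep_eq,
    gradient_comp_similarity V hc.ne' (hF.differentiable (by norm_num) z)]
  simp only [bnqnOperator_similarity hF V hc, bnqnKappa_mul_norm_rpow_similarity V hc, minsp_smul,
    minsp_conjStarAlgEquiv, abs_of_pos hc2, mul_le_mul_iff_of_pos_left hc2, smul_eq_zero,
    hc.ne', false_or, LinearIsometryEquiv.map_eq_zero_iff, bnqnDirection_similarity V hc]
  split_ifs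
  · rfl
  · exact armijoStep_similarity F V hc.ne' γ₀ _ _ _
  · rfl

end EuclideanSpace

theorem bnqn_invariant_under_unitary_conjugation_general
    {m : ℕ} (F : EuclideanSpace ℝ (Fin m) → ℝ) (hF : ContDiff ℝ 2 F)
    (c : ℝ) (hc : 0 < c)
    (R : EuclideanSpace ℝ (Fin m) →L[ℝ] EuclideanSpace ℝ (Fin m))
    (hR : R.comp (ContinuousLinearMap.adjoint R) =
      ContinuousLinearMap.id ℝ (EuclideanSpace ℝ (Fin m)))
    (A : EuclideanSpace ℝ (Fin m) → EuclideanSpace ℝ (Fin m)) (hA : ∀ z, A z = c • R z)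
    (G : EuclideanSpace ℝ (Fin m) → ℝ) (hG : ∀ z, G z = F (A z))
    (δ δ' : Fin (m + 1) → ℝ) (θ θ' τ γ₀ : ℝ)
    (hδ' : ∀ i, δ' i = δ i * c ^ ((2 : ℝ) - τ)) (hθ' : θ' = c * θ)
    (z₀ z₀' : EuclideanSpace ℝ (Fin m))
    (hz₀' : z₀' = c⁻¹ • (ContinuousLinearMap.adjoint R) z₀) :
    ∀ n : ℕ, bnqnSeq G δ' θ' τ γ₀ z₀' n =
      c⁻¹ • (ContinuousLinearMap.adjoint R) (bnqnSeq F δ θ τ γ₀ z₀ n) := by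
  set V := (Unitary.linearIsometryEquiv
    ⟨R, ContinuousLinearMap.mem_unitary_of_comp_adjoint_eq_id hR⟩).symm
  have hV (x : EuclideanSpace ℝ (Fin m)) : ContinuousLinearMap.adjoint R x = V x := rfl
  have hG_eq : G = fun w => F (c • V.symm w) := funext fun w => by rw [hG, hA]; rfl
  obtain rfl : δ' = fun i => δ i * c ^ ((2 : ℝ) - τ) := funext hδ'
  subst hG_eq hθ' hz₀'
  intro n
  induction n with
  | zero => rfl
  | succ n ih => rw [bnqnSeq, bnqnSeq, ih, hV, hV, bnqnStep_similarity hF V hc]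

/-- **Theorem 2 (invariance of BNQN under conjugation by `A = cR`, `R` unitary, `c > 0`).**
If `G = F ∘ A` with `A = c R`, `R Rᵀ = Id`, `c > 0`, `δᵢ' = δᵢ c^{2-τ}`, `θ' = cθ`, and
`z₀' = A⁻¹ z₀ = c⁻¹ Rᵀ z₀`, then the BNQN sequences satisfy `zₙ' = A⁻¹ zₙ` for all `n`. -/
theorem bnqn_invariant_under_unitary_conjugation
    {m : ℕ} (F : EuclideanSpace ℝ (Fin m) → ℝ) (hF : ContDiff ℝ 2 F)
    (c : ℝ) (hc : 0 < c)
    (R : EuclideanSpace ℝ (Fin m) →L[ℝ] EuclideanSpace ℝ (Fin m))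
    (hR : R.comp (ContinuousLinearMap.adjoint R) =
      ContinuousLinearMap.id ℝ (EuclideanSpace ℝ (Fin m)))
    (A : EuclideanSpace ℝ (Fin m) → EuclideanSpace ℝ (Fin m)) (hA : ∀ z, A z = c • R z)
    (G : EuclideanSpace ℝ (Fin m) → ℝ) (hG : ∀ z, G z = F (A z))
    (δ δ' : Fin (m + 1) → ℝ) (θ θ' τ γ₀ : ℝ)
    (hδ : Function.Injective δ) (hθ : 0 ≤ θ) (hτ : 0 < τ) (hγ₀ : 0 < γ₀) (hγ₀' : γ₀ ≤ 1)
    (hδ' : ∀ i, δ' i = δ i * c ^ ((2 : ℝ) - τ)) (hθ' : θ' = c * θ)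
    (z₀ z₀' : EuclideanSpace ℝ (Fin m))
    (hz₀' : z₀' = c⁻¹ • (ContinuousLinearMap.adjoint R) z₀) :
    ∀ n : ℕ, bnqnSeq G δ' θ' τ γ₀ z₀' n =
      c⁻¹ • (ContinuousLinearMap.adjoint R) (bnqnSeq F δ θ τ γ₀ z₀ n) :=
  bnqn_invariant_under_unitary_conjugation_general F hF c hc R hR A hA G hG δ δ' θ θ' τ γ₀ hδ' hθ'
    z₀ z₀' hz₀'
end
end

section
/- (Schröder's theorem) Let f(z) = c(z − z₁*)(z − z₂*) with c, z₁*, z₂* ∈ ℂ, c ≠ 0 and z₁* ≠ z₂*. Let L be the perpendicular bisector of the segment joining z₁* and z₂*, and let H₁, H₂ be the two open half-planes bounded by L, with z₁* ∈ H₁ and z₂* ∈ H₂. If z₀ ∈ H₁, then the Newton sequence z_{n+1} = z_n − f(z_n)/f'(z_n) is well defined (f'(z_n) ≠ 0 for all n), stays in H₁, and converges to z₁*; similarly, if z₀ ∈ H₂ then the Newton sequence converges to z₂*. -/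
/-!
For `f = c (w - z₁)(w - z₂)` Newton's map is `N w = w - (w - z₁)(w - z₂) / (2w - z₁ - z₂)`, and
`N w - zᵢ = (w - zᵢ)² / (2w - z₁ - z₂)`. Hence the ratio `q = (w - z₁) / (w - z₂)` is squared by
each step (Newton's method is conjugate to `q ↦ q²` by a Möbius map), so `‖q‖ < 1` is preserved,
`qₙ = q₀ ^ 2ⁿ → 0`, and `zₙ = z₁ + qₙ (z₁ - z₂) / (1 - qₙ) → z₁`.
-/

open Filter Topology

section NewtonQuadratic

variable {𝕜 : Type*} [NontriviallyNormedField 𝕜]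

theorem hasDerivAt_mul_sub_mul_sub (c a b w : 𝕜) :
    HasDerivAt (fun w => c * (w - a) * (w - b)) (c * (2 * w - a - b)) w := by
  have h := (((hasDerivAt_id' w).sub_const a).const_mul c).mul ((hasDerivAt_id' w).sub_const b)
  exact h.congr_deriv (by ring)

theorem two_mul_sub_sub_ne_zero_of_norm_sub_lt {a b w : 𝕜} (h : ‖w - a‖ < ‖w - b‖) :
    2 * w - a - b ≠ 0 := by
  intro h0
  have : w - a = -(w - b) := by linear_combination h0
  rw [this, norm_neg] at h
  exact h.false

def newtonQuadratic (a b w : 𝕜) : 𝕜 :=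
  w - (w - a) * (w - b) / (2 * w - a - b)

theorem newtonQuadratic_comm (a b : 𝕜) : newtonQuadratic a b = newtonQuadratic b a := by
  ext w
  simp only [newtonQuadratic]
  ring

theorem newtonQuadratic_sub_left {a b w : 𝕜} (h : 2 * w - a - b ≠ 0) :
    newtonQuadratic a b w - a = (w - a) ^ 2 / (2 * w - a - b) := by
  rw [eq_div_iff h, newtonQuadratic, sub_mul, sub_mul, div_mul_cancel₀ _ h]
  ring

theorem newtonQuadratic_sub_right {a b w : 𝕜} (h : 2 * w - a - b ≠ 0) :
    newtonQuadratic a b w - b = (w - b) ^ 2 / (2 * w - a - b) := by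
  rw [newtonQuadratic_comm, sub_right_comm] at *
  exact newtonQuadratic_sub_left h

theorem norm_newtonQuadratic_sub_lt {a b w : 𝕜} (h : ‖w - a‖ < ‖w - b‖) :
    ‖newtonQuadratic a b w - a‖ < ‖newtonQuadratic a b w - b‖ := by
  have hd := two_mul_sub_sub_ne_zero_of_norm_sub_lt h
  rw [newtonQuadratic_sub_left hd, newtonQuadratic_sub_right hd, norm_div, norm_div, norm_pow,
    norm_pow]
  gcongr

theorem newtonQuadratic_div {a b w : 𝕜} (h : 2 * w - a - b ≠ 0) :
    (newtonQuadratic a b w - a) / (newtonQuadratic a b w - b) = ((w - a) / (w - b)) ^ 2 := by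
  rw [newtonQuadratic_sub_left h, newtonQuadratic_sub_right h, div_div_div_cancel_right₀ h,
    div_pow]

variable {a b : 𝕜} {z : ℕ → 𝕜}

theorem norm_sub_lt_of_newtonQuadratic (hz : ∀ n, z (n + 1) = newtonQuadratic a b (z n))
    (h0 : ‖z 0 - a‖ < ‖z 0 - b‖) (n : ℕ) : ‖z n - a‖ < ‖z n - b‖ := by
  induction n with
  | zero => exact h0
  | succ n ih => exact hz n ▸ norm_newtonQuadratic_sub_lt ih

theorem div_sub_eq_pow_of_newtonQuadratic (hz : ∀ n, z (n + 1) = newtonQuadratic a b (z n))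
    (h0 : ‖z 0 - a‖ < ‖z 0 - b‖) (n : ℕ) :
    (z n - a) / (z n - b) = ((z 0 - a) / (z 0 - b)) ^ 2 ^ n := by
  induction n with
  | zero => rw [pow_zero, pow_one]
  | succ n ih =>
    have hd := two_mul_sub_sub_ne_zero_of_norm_sub_lt (norm_sub_lt_of_newtonQuadratic hz h0 n)
    rw [hz n, newtonQuadratic_div hd, ih, ← pow_mul, pow_succ]

theorem tendsto_of_newtonQuadratic (hz : ∀ n, z (n + 1) = newtonQuadratic a b (z n))
    (h0 : ‖z 0 - a‖ < ‖z 0 - b‖) : Tendsto z atTop (𝓝 a) := by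
  set q : ℕ → 𝕜 := fun n => (z n - a) / (z n - b)
  have hq : Tendsto q atTop (𝓝 0) := by
    have hq0 : ‖q 0‖ < 1 := by
      rw [norm_div, div_lt_one ((norm_nonneg _).trans_lt h0)]
      exact h0
    rw [show q = fun n => q 0 ^ 2 ^ n from funext (div_sub_eq_pow_of_newtonQuadratic hz h0)]
    exact (tendsto_pow_atTop_nhds_zero_of_norm_lt_one hq0).comp
      (tendsto_pow_atTop_atTop_of_one_lt one_lt_two)
  have hab : a - b ≠ 0 := by
    rw [sub_ne_zero]
    rintro rfl
    exact h0.false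
  have hz_eq (n : ℕ) : a + q n * (a - b) / (1 - q n) = z n := by
    have hlt := norm_sub_lt_of_newtonQuadratic hz h0 n
    have hb : z n - b ≠ 0 := norm_pos_iff.mp ((norm_nonneg _).trans_lt hlt)
    have hq1 : 1 - q n = (a - b) / (z n - b) := by
      rw [one_sub_div hb]
      ring
    rw [hq1]
    simp only [q]
    field_simp
    ring
  have hcont : ContinuousAt (fun p : 𝕜 => a + p * (a - b) / (1 - p)) 0 :=
    continuousAt_const.add ((continuousAt_id.mul continuousAt_const).div
      (continuousAt_const.sub continuousAt_id) (by simp))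
  simpa using (hcont.tendsto.comp hq).congr hz_eq

end NewtonQuadratic

theorem newton_schroeder_general
    (c z₁ z₂ : ℂ) (hc : c ≠ 0)
    (f : ℂ → ℂ) (hf : ∀ z, f z = c * (z - z₁) * (z - z₂))
    (z : ℕ → ℂ)
    (hz : ∀ n, z (n + 1) = z n - f (z n) / deriv f (z n)) :
    (‖z 0 - z₁‖ < ‖z 0 - z₂‖ →
      (∀ n, deriv f (z n) ≠ 0) ∧
      (∀ n, ‖z n - z₁‖ < ‖z n - z₂‖) ∧
      Filter.Tendsto z Filter.atTop (nhds z₁)) ∧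
    (‖z 0 - z₂‖ < ‖z 0 - z₁‖ →
      (∀ n, deriv f (z n) ≠ 0) ∧
      (∀ n, ‖z n - z₂‖ < ‖z n - z₁‖) ∧
      Filter.Tendsto z Filter.atTop (nhds z₂)) := by
  have hderiv (w : ℂ) : deriv f w = c * (2 * w - z₁ - z₂) := by
    rw [funext hf]
    exact (hasDerivAt_mul_sub_mul_sub c z₁ z₂ w).deriv
  have hstep (n : ℕ) : z (n + 1) = newtonQuadratic z₁ z₂ (z n) := by
    rw [hz, hf, hderiv, mul_assoc, mul_div_mul_left _ _ hc, newtonQuadratic]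
  have converges {a b : ℂ} (hstep : ∀ n, z (n + 1) = newtonQuadratic a b (z n))
      (hderiv : ∀ w, deriv f w = c * (2 * w - a - b)) (h0 : ‖z 0 - a‖ < ‖z 0 - b‖) :
      (∀ n, deriv f (z n) ≠ 0) ∧ (∀ n, ‖z n - a‖ < ‖z n - b‖) ∧ Tendsto z atTop (𝓝 a) :=
    ⟨fun n => hderiv (z n) ▸ mul_ne_zero hc
        (two_mul_sub_sub_ne_zero_of_norm_sub_lt (norm_sub_lt_of_newtonQuadratic hstep h0 n)),
      norm_sub_lt_of_newtonQuadratic hstep h0, tendsto_of_newtonQuadratic hstep h0⟩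
  exact ⟨converges hstep hderiv,
    converges (newtonQuadratic_comm z₁ z₂ ▸ hstep) (fun w => by rw [hderiv, sub_right_comm])⟩

/-- **Schröder's theorem.** Let `f(z) = c (z - z₁*)(z - z₂*)` with `c ≠ 0` and `z₁* ≠ z₂*`.
If the initial point `z₀` lies in the open half-plane `H₁` of points strictly closer to `z₁*`
than to `z₂*` (one of the two half-planes bounded by the perpendicular bisector of the
segment `[z₁*, z₂*]`), then the Newton sequence is well defined (`f'(zₙ) ≠ 0`), stays in
`H₁`, and converges to `z₁*`; similarly, if `z₀` is strictly closer to `z₂*`, then the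
Newton sequence converges to `z₂*`. -/
theorem newton_schroeder
    (c z₁ z₂ : ℂ) (hc : c ≠ 0) (h₁₂ : z₁ ≠ z₂)
    (f : ℂ → ℂ) (hf : ∀ z, f z = c * (z - z₁) * (z - z₂))
    (z : ℕ → ℂ)
    (hz : ∀ n, z (n + 1) = z n - f (z n) / deriv f (z n)) :
    (‖z 0 - z₁‖ < ‖z 0 - z₂‖ →
      (∀ n, deriv f (z n) ≠ 0) ∧
      (∀ n, ‖z n - z₁‖ < ‖z n - z₂‖) ∧
      Filter.Tendsto z Filter.atTop (nhds z₁)) ∧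
    (‖z 0 - z₂‖ < ‖z 0 - z₁‖ →
      (∀ n, deriv f (z n) ≠ 0) ∧
      (∀ n, ‖z n - z₂‖ < ‖z n - z₁‖) ∧
      Filter.Tendsto z Filter.atTop (nhds z₂)) :=
  newton_schroeder_general c z₁ z₂ hc f hf z hz
end

section
/- Let N(z) = (z² + 1)/(2z) be the Newton map of f(z) = z² − 1 and let L = {iy : y ∈ ℝ} ⊂ ℂ be the imaginary axis. Then there exists a point z ∈ L, z ≠ 0, such that all forward iterates N^k(z), k ≥ 0, are defined and nonzero, and the forward orbit {N^k(z) : k ≥ 0} is dense in L. -/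
/-!
Writing `z = i cot (π t)` conjugates `N` on the imaginary axis to the doubling map `t ↦ 2 t` on
`ℝ / ℤ`, because `cot 2x = (cot² x - 1) / (2 cot x)`. The doubling map is ergodic, so almost every
orbit is dense. An orbit meeting `cot (π t) = 0` (the pole of `N`) lands on the fixed point `0`
one step later and is finite, so a dense orbit avoids it. Finally `t ↦ i cot (π t)` is continuous
on `t ≠ 0` and maps it onto `L`, so it carries the dense orbit to a dense orbit in `L`.
-/

open Function Set MeasureTheory Real

section ErgodicDenseOrbit

variable {α : Type*} [MeasurableSpace α] {f : α → α} {μ : Measure α} [IsFiniteMeasure μ]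

theorem Ergodic.ae_exists_iterate_mem (hf : Ergodic f μ) {s : Set α} (hs : MeasurableSet s)
    (hμs : μ s ≠ 0) : ∀ᵐ x ∂μ, ∃ n, f^[n] x ∈ s := by
  set A := ⋃ n, f^[n] ⁻¹' s
  have hA : MeasurableSet A := .iUnion fun n => hs.preimage (hf.measurable.iterate n)
  have hfA : f ⁻¹' A ⊆ A := by
    simp only [A, preimage_iUnion, ← preimage_comp, ← iterate_succ]
    exact iUnion_subset fun n => subset_iUnion (fun n => f^[n] ⁻¹' s) (n + 1)
  rcases hf.ae_empty_or_univ_of_preimage_ae_le hA.nullMeasurableSet hfA.eventuallyLE with h | h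
  · exact absurd (measure_mono_null (subset_iUnion (fun n => f^[n] ⁻¹' s) 0) (ae_eq_empty.mp h))
      hμs
  · have hAae : ∀ᵐ x ∂μ, x ∈ A := ae_eq_univ.mp h
    exact hAae.mono fun x hx => mem_iUnion.mp hx

theorem Ergodic.ae_denseRange_iterate [TopologicalSpace α] [SecondCountableTopology α]
    [OpensMeasurableSpace α] [μ.IsOpenPosMeasure] (hf : Ergodic f μ) :
    ∀ᵐ x ∂μ, DenseRange fun n => f^[n] x := by
  set B := TopologicalSpace.countableBasis α
  have hB : TopologicalSpace.IsTopologicalBasis B := TopologicalSpace.isBasis_countableBasis α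
  have hvisit : ∀ᵐ x ∂μ, ∀ U ∈ {U ∈ B | U.Nonempty}, ∃ n, f^[n] x ∈ U :=
    (ae_ball_iff ((TopologicalSpace.countable_countableBasis α).mono fun _ hU => hU.1)).mpr
      fun U hU => hf.ae_exists_iterate_mem (hB.isOpen hU.1).measurableSet
        ((hB.isOpen hU.1).measure_ne_zero μ hU.2)
  filter_upwards [hvisit] with x hx
  refine hB.dense_iff.mpr fun U hU hne => ?_
  obtain ⟨n, hn⟩ := hx U ⟨hU, hne⟩
  exact ⟨_, hn, n, rfl⟩

end ErgodicDenseOrbit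

theorem Function.IsFixedPt.finite_range_iterate {α : Type*} {f : α → α} {x : α} {m : ℕ}
    (h : IsFixedPt f (f^[m] x)) : (range fun n => f^[n] x).Finite := by
  refine ((finite_Iic m).image fun n => f^[n] x).subset ?_
  rintro _ ⟨n, rfl⟩
  rcases le_or_gt n m with hn | hn
  · exact ⟨n, hn, rfl⟩
  · obtain ⟨j, rfl⟩ := Nat.exists_eq_add_of_le hn.le
    refine ⟨m, mem_Iic.mpr le_rfl, ?_⟩
    show f^[m] x = f^[m + j] x
    rw [add_comm, iterate_add_apply, (h.iterate j).eq]

theorem DenseRange.infinite_range {ι β : Type*} [TopologicalSpace β] [T1Space β] [Infinite β]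
    {g : ι → β} (hg : DenseRange g) : (range g).Infinite := fun hfin =>
  infinite_univ (by rwa [← hg.closure_range, hfin.isClosed.closure_eq])

theorem Function.Semiconj.mem_closure_range_iterate {α β : Type*} [TopologicalSpace α]
    [TopologicalSpace β] {Φ : α → β} {f : α → α} {g : β → β} (h : Semiconj Φ f g) {x : α}
    (hx : DenseRange fun n => f^[n] x) {a : α} (ha : ContinuousAt Φ a) :
    Φ a ∈ closure (range fun n => g^[n] (Φ x)) := by
  have hrange : Φ '' range (fun n => f^[n] x) = range fun n => g^[n] (Φ x) := by
    rw [← range_comp]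
    exact congrArg range (funext fun n => h.iterate_right n x)
  exact hrange ▸ mem_closure_image ha (hx.closure_range ▸ mem_univ a)

instance AddCircle.infinite {p : ℝ} [Fact (0 < p)] : Infinite (AddCircle p) := by
  have := (Ico_infinite (lt_add_of_pos_right 0 (Fact.out : 0 < p))).to_subtype
  exact Infinite.of_injective _ (AddCircle.equivIco p 0).symm.injective

namespace Real

theorem cot_add_pi (x : ℝ) : cot (x + π) = cot x := by
  rw [cot_eq_cos_div_sin, cot_eq_cos_div_sin, cos_add_pi, sin_add_pi, neg_div_neg_eq]

/-- Also where `sin x = 0` or `cos x = 0`: there both sides are the junk value `0`. -/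
theorem cot_two_mul (x : ℝ) : cot (2 * x) = (cot x ^ 2 - 1) / (2 * cot x) := by
  rw [cot_eq_cos_div_sin, cot_eq_cos_div_sin, sin_two_mul, cos_two_mul']
  rcases eq_or_ne (sin x) 0 with hs | hs
  · simp [hs]
  rcases eq_or_ne (cos x) 0 with hc | hc
  · simp [hc]
  field_simp

theorem sin_two_mul_eq_zero_of_cot_eq_zero {x : ℝ} (h : cot x = 0) : sin (2 * x) = 0 := by
  rw [cot_eq_cos_div_sin, div_eq_zero_iff] at h
  rcases h with h | h <;> simp [sin_two_mul, h]

theorem cot_pi_div_two_sub (x : ℝ) : cot (π / 2 - x) = tan x := by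
  rw [cot_eq_cos_div_sin, cos_pi_div_two_sub, sin_pi_div_two_sub, tan_eq_sin_div_cos]

theorem continuousAt_cot {x : ℝ} (h : sin x ≠ 0) : ContinuousAt cot x := by
  rw [show cot = fun x => cos x / sin x from funext cot_eq_cos_div_sin]
  exact continuous_cos.continuousAt.div continuous_sin.continuousAt h

end Real

namespace AddCircle

noncomputable def cotPi : AddCircle (1 : ℝ) → ℝ :=
  Periodic.lift (f := fun t => cot (π * t)) fun t => by
    simpa only [mul_add, mul_one] using Real.cot_add_pi (π * t)

theorem cotPi_coe (t : ℝ) : cotPi t = cot (π * t) := rfl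

theorem cotPi_two_nsmul (t : AddCircle (1 : ℝ)) :
    cotPi (2 • t) = (cotPi t ^ 2 - 1) / (2 * cotPi t) := by
  induction t using QuotientAddGroup.induction_on with
  | H t =>
    rw [← coe_nsmul, cotPi_coe, cotPi_coe, nsmul_eq_mul, Nat.cast_ofNat, mul_left_comm,
      Real.cot_two_mul]

theorem two_nsmul_eq_zero_of_cotPi_eq_zero {t : AddCircle (1 : ℝ)} (h : cotPi t = 0) :
    2 • t = 0 := by
  induction t using QuotientAddGroup.induction_on with
  | H t =>
    obtain ⟨n, hn⟩ := Real.sin_eq_zero_iff.mp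
      (Real.sin_two_mul_eq_zero_of_cot_eq_zero (x := π * t) h)
    rw [← coe_nsmul, coe_eq_zero_iff]
    refine ⟨n, ?_⟩
    rw [zsmul_eq_mul, mul_one, nsmul_eq_mul, Nat.cast_ofNat]
    exact mul_right_cancel₀ pi_ne_zero (by linarith)

theorem continuousAt_cotPi_coe {t : ℝ} (h : sin (π * t) ≠ 0) :
    ContinuousAt cotPi (t : AddCircle (1 : ℝ)) :=
  QuotientAddGroup.isOpenQuotientMap_mk.continuousAt_comp_iff.mp
    ((Real.continuousAt_cot h).comp (continuous_const.mul continuous_id).continuousAt)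

theorem exists_continuousAt_cotPi_eq (y : ℝ) : ∃ a, ContinuousAt cotPi a ∧ cotPi a = y := by
  have hπ : π * (1 / 2 - arctan y / π) = π / 2 - arctan y := by
    field_simp
  refine ⟨(1 / 2 - arctan y / π : ℝ), continuousAt_cotPi_coe ?_, ?_⟩
  · rw [hπ, sin_pi_div_two_sub]
    exact (cos_arctan_pos y).ne'
  · rw [cotPi_coe, hπ, Real.cot_pi_div_two_sub, tan_arctan]

end AddCircle

theorem Complex.I_mul_ofReal_sq_add_one_div (y : ℝ) :
    ((Complex.I * y) ^ 2 + 1) / (2 * (Complex.I * y)) =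
      Complex.I * ((y ^ 2 - 1) / (2 * y) : ℝ) := by
  rcases eq_or_ne y 0 with rfl | hy
  · simp
  have hy' : (y : ℂ) ≠ 0 := Complex.ofReal_ne_zero.mpr hy
  push_cast
  field_simp
  linear_combination Complex.I_sq

/-- **Chaotic behaviour of the Newton map of `z² - 1` on the imaginary axis: a dense
orbit.** For `N(z) = (z² + 1)/(2z)` and `L` the imaginary axis, there is a nonzero point
`z ∈ L` all of whose forward iterates are defined (nonzero) and whose forward orbit
`{N^k(z) : k ≥ 0}` is dense in `L`. -/
theorem newton_map_imaginary_axis_dense_orbit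
    (N : ℂ → ℂ) (hN : ∀ z, N z = (z ^ 2 + 1) / (2 * z))
    (L : Set ℂ) (hL : L = {z : ℂ | z.re = 0}) :
    ∃ z ∈ L, z ≠ 0 ∧ (∀ k : ℕ, N^[k] z ≠ 0) ∧
      ∀ w ∈ L, w ∈ closure {x : ℂ | ∃ k : ℕ, x = N^[k] z} := by
  subst hL
  set Φ : AddCircle (1 : ℝ) → ℂ := fun t => Complex.I * AddCircle.cotPi t
  have hΦ : Semiconj Φ (2 • ·) N := fun t => by
    simp only [Φ, hN, AddCircle.cotPi_two_nsmul, Complex.I_mul_ofReal_sq_add_one_div]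
  obtain ⟨x, hx⟩ := (AddCircle.ergodic_nsmul (T := 1) one_lt_two).ae_denseRange_iterate.exists
  have hne : ∀ k, N^[k] (Φ x) ≠ 0 := by
    intro k hk
    rw [← hΦ.iterate_right k x] at hk
    have hzero : (2 • ·)^[k + 1] x = 0 := by
      rw [iterate_succ_apply']
      exact AddCircle.two_nsmul_eq_zero_of_cotPi_eq_zero (by simpa [Φ] using hk)
    have hfix : IsFixedPt (2 • · : AddCircle (1 : ℝ) → _) ((2 • ·)^[k + 1] x) := by
      rw [hzero]; exact smul_zero 2
    exact hx.infinite_range hfix.finite_range_iterate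
  refine ⟨Φ x, by simp [Φ], hne 0, hne, fun w hw => ?_⟩
  obtain ⟨a, ha, haw⟩ := AddCircle.exists_continuousAt_cotPi_eq w.im
  have hwa : w = Φ a := by
    apply Complex.ext <;> simp [Φ, haw, hw.out]
  have hΦa : ContinuousAt Φ a :=
    (continuous_const.mul Complex.continuous_ofReal).continuousAt.comp ha
  simpa [hwa, Set.range, eq_comm] using hΦ.mem_closure_range_iterate hx hΦa
end

section
/- For all x > 0 and y > 0, the inner products ⟨u₁, ∇F(x,y)⟩ and ⟨u₂, ∇F(x,y)⟩ are strictly positive; consequently there exist real numbers a₁ > 0 and a₂ > 0 such that ∇F(x,y) = a₁u₁ + a₂u₂. -/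
open scoped RealInnerProductSpace

/-!
With `w = f(z) = (x² - y² - 1) + 2ixy`, the vectors `u₂ = w + |w|` and `u₁ = w - |w|` are
orthogonal (they point along `√w` and `i√w`), and `∇F = 2 z̄ w`. Writing `r = x² + y² - 1`, this gives
`⟪u₁, ∇F⟫ = 2xS(S - r)` and `⟪u₂, ∇F⟫ = 2xS(S + r)`, both positive because
`S² = r² + 4y² > r²`.
-/

section TwoDimensional

variable {E : Type*} [NormedAddCommGroup E] [InnerProductSpace ℝ E]

theorem exists_pos_smul_add_pos_smul_of_inner_pos (hE : Module.finrank ℝ E = 2)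
    {u₁ u₂ v : E} (h₁₂ : ⟪u₁, u₂⟫ = 0) (h₁ : 0 < ⟪u₁, v⟫) (h₂ : 0 < ⟪u₂, v⟫) :
    ∃ a₁ a₂ : ℝ, 0 < a₁ ∧ 0 < a₂ ∧ v = a₁ • u₁ + a₂ • u₂ := by
  have hu₁ : u₁ ≠ 0 := by rintro rfl; simp at h₁
  have hu₂ : u₂ ≠ 0 := by rintro rfl; simp at h₂
  have hli : LinearIndependent ℝ ![u₁, u₂] := by
    refine linearIndependent_of_ne_zero_of_inner_eq_zero (fun i ↦ ?_) fun i j hij ↦ ?_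
    · fin_cases i <;> assumption
    · fin_cases i <;> fin_cases j <;> simp_all [real_inner_comm]
  have hspan := hli.span_eq_top_of_card_eq_finrank (by simp [hE])
  obtain ⟨a₁, a₂, rfl⟩ : ∃ a₁ a₂ : ℝ, a₁ • u₁ + a₂ • u₂ = v := by
    rw [← Submodule.mem_span_pair, ← Matrix.range_cons_cons_empty, hspan]
    exact Submodule.mem_top
  refine ⟨a₁, a₂, ?_, ?_, rfl⟩
  · refine pos_of_mul_pos_left (b := ‖u₁‖ ^ 2) ?_ (by positivity)
    simpa [inner_add_right, inner_smul_right, h₁₂, real_inner_self_eq_norm_sq] using h₁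
  · refine pos_of_mul_pos_left (b := ‖u₂‖ ^ 2) ?_ (by positivity)
    simpa [inner_add_right, inner_smul_right, real_inner_comm u₁ u₂ ▸ h₁₂,
      real_inner_self_eq_norm_sq] using h₂

end TwoDimensional

theorem EuclideanSpace.inner_toLp_fin_two (a b c d : ℝ) :
    ⟪(WithLp.toLp 2 ![a, b] : EuclideanSpace ℝ (Fin 2)), WithLp.toLp 2 ![c, d]⟫ = a * c + b * d := by
  simp [EuclideanSpace.inner_toLp_toLp, dotProduct, Fin.sum_univ_two, mul_comm]

/-- **Claim 1.** For `F(x,y) = ((x²-y²-1)² + 4x²y²)/2` (i.e. `F = |f|²/2` for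
`f(z) = z²-1`), with `∇F(x,y) = (2(x²+y²-1)x, 2(x²+y²+1)y)`,
`S = √((1-x²+y²)² + 4x²y²)`, `u₁ = (x²-y²-1-S, 2xy)` and `u₂ = (x²-y²-1+S, 2xy)`:
if `x > 0` and `y > 0`, then `⟨u₁, ∇F⟩ > 0` and `⟨u₂, ∇F⟩ > 0`, and consequently
`∇F = a₁ u₁ + a₂ u₂` for some `a₁, a₂ > 0`. -/
theorem gradient_positive_combination_of_eigenvectors
    (x y : ℝ) (hx : 0 < x) (hy : 0 < y)
    (S : ℝ) (hS : S = Real.sqrt ((1 - x ^ 2 + y ^ 2) ^ 2 + 4 * x ^ 2 * y ^ 2))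
    (gF u₁ u₂ : EuclideanSpace ℝ (Fin 2))
    (hgF : gF = WithLp.toLp 2 ![2 * (x ^ 2 + y ^ 2 - 1) * x, 2 * (x ^ 2 + y ^ 2 + 1) * y])
    (hu₁ : u₁ = WithLp.toLp 2 ![x ^ 2 - y ^ 2 - 1 - S, 2 * x * y])
    (hu₂ : u₂ = WithLp.toLp 2 ![x ^ 2 - y ^ 2 - 1 + S, 2 * x * y]) :
    0 < ⟪u₁, gF⟫ ∧ 0 < ⟪u₂, gF⟫ ∧
      ∃ a₁ a₂ : ℝ, 0 < a₁ ∧ 0 < a₂ ∧ gF = a₁ • u₁ + a₂ • u₂ := by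
  set r := x ^ 2 + y ^ 2 - 1
  have hSr : S = √(r ^ 2 + 4 * y ^ 2) := by rw [hS]; congr 1; ring
  have hS2 : S ^ 2 = r ^ 2 + 4 * y ^ 2 := by rw [hSr, Real.sq_sqrt (by positivity)]
  obtain ⟨hrS₁, hrS₂⟩ : -S < r ∧ r < S := abs_lt.mp <| by
    rw [← Real.sqrt_sq_eq_abs, hSr]
    exact Real.sqrt_lt_sqrt (sq_nonneg r) (lt_add_of_pos_right _ (by positivity))
  have hinner₁ : ⟪u₁, gF⟫ = 2 * x * S * (S - r) := by
    rw [hu₁, hgF, EuclideanSpace.inner_toLp_fin_two]; linear_combination (-2 * x) * hS2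
  have hinner₂ : ⟪u₂, gF⟫ = 2 * x * S * (S + r) := by
    rw [hu₂, hgF, EuclideanSpace.inner_toLp_fin_two]; linear_combination (-2 * x) * hS2
  have horth : ⟪u₁, u₂⟫ = 0 := by
    rw [hu₁, hu₂, EuclideanSpace.inner_toLp_fin_two]; linear_combination -hS2
  have hS0 : 0 < S := by linarith
  have hpos₁ : 0 < ⟪u₁, gF⟫ := hinner₁ ▸ mul_pos (by positivity) (sub_pos.mpr hrS₂)
  have hpos₂ : 0 < ⟪u₂, gF⟫ := hinner₂ ▸ mul_pos (by positivity) (neg_lt_iff_pos_add'.mp hrS₁)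
  exact ⟨hpos₁, hpos₂, exists_pos_smul_add_pos_smul_of_inner_pos finrank_euclideanSpace_fin
    horth hpos₁ hpos₂⟩
end

section
/- Let x > 0, y > 0 and ŷ ∈ ℝ. If the vector (x, y − ŷ) satisfies ⟨(x, y − ŷ), u₁⟩ > 0 and ⟨(x, y − ŷ), u₂⟩ > 0, then ŷ ≤ (x² + y² − 1 − √((x² + y² − 1)² + 4y²)) / (2y). -/
open scoped RealInnerProductSpace

/-- **Claim 2 (upper bound on the crossing point).** Let `x > 0`, `y > 0`,
`S = √((1-x²+y²)² + 4x²y²)`, `u₁ = (x²-y²-1-S, 2xy)`, `u₂ = (x²-y²-1+S, 2xy)`.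
If the vector `(x, y - ŷ)` has positive inner products with both `u₁` and `u₂`, then
`ŷ ≤ (x² + y² - 1 - √((x²+y²-1)² + 4y²)) / (2y)`. -/
theorem crossing_point_upper_bound
    (x y yh : ℝ) (hx : 0 < x) (hy : 0 < y)
    (S : ℝ) (hS : S = Real.sqrt ((1 - x ^ 2 + y ^ 2) ^ 2 + 4 * x ^ 2 * y ^ 2))
    (u₁ u₂ v : EuclideanSpace ℝ (Fin 2))
    (hu₁ : u₁ = ![x ^ 2 - y ^ 2 - 1 - S, 2 * x * y])
    (hu₂ : u₂ = ![x ^ 2 - y ^ 2 - 1 + S, 2 * x * y])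
    (hv : v = ![x, y - yh])
    (h₁ : 0 < ⟪v, u₁⟫) (h₂ : 0 < ⟪v, u₂⟫) :
    yh ≤ (x ^ 2 + y ^ 2 - 1 - Real.sqrt ((x ^ 2 + y ^ 2 - 1) ^ 2 + 4 * y ^ 2)) / (2 * y) := by
  have hT : Real.sqrt ((x ^ 2 + y ^ 2 - 1) ^ 2 + 4 * y ^ 2) = S := by
    rw [hS]; congr 1; ring
  simp only [hv, hu₁, hu₂, PiLp.inner_apply, RCLike.inner_apply, starRingEnd_apply,
    star_trivial, Fin.sum_univ_two, Matrix.cons_val_zero, Matrix.cons_val_one,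
    Matrix.head_cons] at h₁ h₂
  rw [hT, le_div_iff₀ (by positivity)]
  nlinarith [h₁, h₂, mul_pos hx hy]
end
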